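/- arXiv:2412.14278 — 4 statements merged into one kernel-verified Lean document; each statement's English description precedes it below -/
import Mathlib

section
/- Let f : ℝ^d → ℝ be differentiable with L-Lipschitz gradient, let β ∈ (1/2, 1), let S ∈ ℝ^{d×p} have full column rank, and set P := S(SᵀS)⁻¹Sᵀ. Let x ∈ ℝ^d, α > β/L, and x₊ := x − α P ∇f(x). Suppose that either (i) α ≤ 1/L, or (ii) x₊ satisfies the line-search acceptance condition f(x₊) ≤ f(x) − α‖P ∇f(x)‖². Then f(x) − f(x₊) ≥ ((2β − 1)/(2L)) ‖(SᵀS)^{-1/2} Sᵀ ∇f(x)‖², where moreover ‖(SᵀS)^{-1/2} Sᵀ ∇f(x)‖² = ‖P ∇f(x)‖². -/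
/-
Since `P` is a symmetric idempotent, `⟨∇f(x), P ∇f(x)⟩ = ‖P ∇f(x)‖²`, and this is also the
squared norm of `(SᵀS)^{-1/2} Sᵀ ∇f(x)`, both matrices having Gram matrix `P`. The descent lemma
`f(x + v) ≤ f(x) + ⟨∇f(x), v⟩ + (L/2)‖v‖²` at `v = -α P ∇f(x)` gives
`f(x) - f(x₊) ≥ α (1 - Lα/2) ‖P ∇f(x)‖²`, which in case (i) is at least `α/2 ‖P ∇f(x)‖²`;
in case (ii) the acceptance condition gives the stronger `α ‖P ∇f(x)‖²`. Either way
`α > β/L` and `β < 1` yield the factor `(2β - 1)/(2L)`.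
-/

open Matrix Finset

/-- The Euclidean norm on `Fin n → ℝ`. -/
noncomputable def euclNorm {n : ℕ} (v : Fin n → ℝ) : ℝ := Real.sqrt (∑ i, v i ^ 2)

open scoped ComplexOrder in
/-- The positive semidefinite square root of a positive semidefinite matrix (as in the older
Mathlib, where it was `Matrix.PosSemidef.sqrt`). -/
noncomputable def Matrix.PosSemidef.sqrt {n 𝕜 : Type*} [Fintype n] [RCLike 𝕜] [DecidableEq n]
    {A : Matrix n n 𝕜} (hA : A.PosSemidef) : Matrix n n 𝕜 :=
  hA.isHermitian.eigenvectorUnitary.1 * diagonal ((↑) ∘ (Real.sqrt ∘ hA.isHermitian.eigenvalues)) *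
  (star hA.isHermitian.eigenvectorUnitary : Matrix n n 𝕜)

namespace Matrix.PosSemidef

open scoped ComplexOrder

variable {n 𝕜 : Type*} [Fintype n] [RCLike 𝕜] [DecidableEq n] {A : Matrix n n 𝕜}

theorem sqrt_mul_self (hA : A.PosSemidef) : hA.sqrt * hA.sqrt = A := by
  set U : Matrix n n 𝕜 := hA.isHermitian.eigenvectorUnitary.1
  set D : Matrix n n 𝕜 := diagonal ((↑) ∘ (Real.sqrt ∘ hA.isHermitian.eigenvalues))
  set V : Matrix n n 𝕜 := (star hA.isHermitian.eigenvectorUnitary : Matrix n n 𝕜)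
  have hU : V * U = 1 := Unitary.coe_star_mul_self _
  have hD : D * D = diagonal (RCLike.ofReal ∘ hA.isHermitian.eigenvalues) := by
    rw [diagonal_mul_diagonal]
    congr 1; funext i
    simp [← RCLike.ofReal_mul, Real.mul_self_sqrt (hA.eigenvalues_nonneg i)]
  conv_rhs => rw [hA.isHermitian.spectral_theorem, Unitary.conjStarAlgAut_apply]
  calc U * D * V * (U * D * V) = U * (D * (V * U) * D) * V := by
        simp only [Matrix.mul_assoc]
    _ = _ := by rw [hU, Matrix.mul_one, hD]

theorem conjTranspose_sqrt (hA : A.PosSemidef) : hA.sqrtᴴ = hA.sqrt := by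
  simp only [Matrix.PosSemidef.sqrt, conjTranspose_mul, diagonal_conjTranspose,
    conjTranspose_conjTranspose, star_eq_conjTranspose, Matrix.mul_assoc]
  congr 3
  funext i
  simp

end Matrix.PosSemidef

section euclNorm

variable {n : ℕ}

theorem euclNorm_eq_norm_toLp (v : Fin n → ℝ) :
    euclNorm v = ‖(WithLp.toLp 2 v : EuclideanSpace ℝ (Fin n))‖ := by
  simp [euclNorm, EuclideanSpace.norm_eq]

theorem euclNorm_nonneg (v : Fin n → ℝ) : 0 ≤ euclNorm v := Real.sqrt_nonneg _

theorem euclNorm_sq (v : Fin n → ℝ) : euclNorm v ^ 2 = v ⬝ᵥ v := by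
  rw [euclNorm_eq_norm_toLp, ← real_inner_self_eq_norm_sq, EuclideanSpace.inner_toLp_toLp]
  simp

theorem euclNorm_smul (c : ℝ) (v : Fin n → ℝ) : euclNorm (c • v) = |c| * euclNorm v := by
  simp [euclNorm_eq_norm_toLp, WithLp.toLp_smul, norm_smul]

theorem dotProduct_le_euclNorm_mul (v w : Fin n → ℝ) : v ⬝ᵥ w ≤ euclNorm v * euclNorm w := by
  simpa [euclNorm_eq_norm_toLp, EuclideanSpace.inner_toLp_toLp, dotProduct_comm] using
    real_inner_le_norm (WithLp.toLp 2 v : EuclideanSpace ℝ (Fin n)) (WithLp.toLp 2 w)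

end euclNorm

theorem le_add_fderiv_add_of_fderiv_sub_le {E : Type*} [NormedAddCommGroup E] [NormedSpace ℝ E]
    {f : E → ℝ} (hf : Differentiable ℝ f) {x v : E} {K : ℝ}
    (hK : ∀ t ∈ Set.Icc (0 : ℝ) 1, fderiv ℝ f (x + t • v) v - fderiv ℝ f x v ≤ K * t) :
    f (x + v) ≤ f x + fderiv ℝ f x v + K / 2 := by
  set g : ℝ → ℝ := fun t ↦ f (x + t • v) - t * fderiv ℝ f x v - K / 2 * t ^ 2
  have hg : ∀ t, HasDerivAt g (fderiv ℝ f (x + t • v) v - fderiv ℝ f x v - K * t) t := by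
    intro t
    have hline : HasDerivAt (fun s : ℝ ↦ x + s • v) v t := by
      simpa using ((hasDerivAt_id t).smul_const v).const_add x
    have hf_line : HasDerivAt (fun s ↦ f (x + s • v)) (fderiv ℝ f (x + t • v) v) t :=
      (hf _).hasFDerivAt.comp_hasDerivAt t hline
    have hquad : HasDerivAt (fun s : ℝ ↦ K / 2 * s ^ 2) (K * t) t :=
      ((hasDerivAt_pow 2 t).const_mul (K / 2)).congr_deriv (by norm_num; ring)
    exact (hf_line.sub (hasDerivAt_mul_const _)).sub hquad
  have hanti : AntitoneOn g (Set.Icc 0 1) := by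
    refine antitoneOn_of_deriv_nonpos (convex_Icc 0 1)
      (fun t _ ↦ (hg t).continuousAt.continuousWithinAt)
      (fun t _ ↦ (hg t).differentiableAt.differentiableWithinAt) fun t ht ↦ ?_
    rw [(hg t).deriv, sub_nonpos]
    exact hK t (interior_subset ht)
  have := hanti (by simp) (by simp) zero_le_one
  norm_num [g] at this
  linarith

theorem descent_lemma {d : ℕ} {L : ℝ} {f : (Fin d → ℝ) → ℝ} {gradf : (Fin d → ℝ) → Fin d → ℝ}
    (hf : Differentiable ℝ f) (hgrad : ∀ x v, fderiv ℝ f x v = gradf x ⬝ᵥ v)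
    (hlip : ∀ x y, euclNorm (gradf x - gradf y) ≤ L * euclNorm (x - y)) (x v : Fin d → ℝ) :
    f (x + v) ≤ f x + gradf x ⬝ᵥ v + L / 2 * euclNorm v ^ 2 := by
  have hK : ∀ t ∈ Set.Icc (0 : ℝ) 1,
      fderiv ℝ f (x + t • v) v - fderiv ℝ f x v ≤ L * euclNorm v ^ 2 * t := by
    intro t ht
    have hstep : euclNorm (x + t • v - x) = t * euclNorm v := by
      rw [add_sub_cancel_left, euclNorm_smul, abs_of_nonneg ht.1]
    calc fderiv ℝ f (x + t • v) v - fderiv ℝ f x v = (gradf (x + t • v) - gradf x) ⬝ᵥ v := by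
          rw [hgrad, hgrad, sub_dotProduct]
      _ ≤ euclNorm (gradf (x + t • v) - gradf x) * euclNorm v := dotProduct_le_euclNorm_mul _ _
      _ ≤ L * (t * euclNorm v) * euclNorm v := by
          rw [← hstep]; exact mul_le_mul_of_nonneg_right (hlip _ _) (euclNorm_nonneg v)
      _ = L * euclNorm v ^ 2 * t := by ring
  have := le_add_fderiv_add_of_fderiv_sub_le hf hK
  rw [hgrad] at this
  linarith

theorem euclNorm_mulVec_sq {m n : ℕ} (M : Matrix (Fin m) (Fin n) ℝ) (u : Fin n → ℝ) :
    euclNorm (M *ᵥ u) ^ 2 = u ⬝ᵥ ((Mᵀ * M) *ᵥ u) := by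
  rw [euclNorm_sq, ← mulVec_mulVec, dotProduct_mulVec u Mᵀ, vecMul_transpose, dotProduct_comm]

section projection

variable {d p : ℕ} (S : Matrix (Fin d) (Fin p) ℝ)

theorem isUnit_transpose_mul_self_of_rank_eq (hrank : S.rank = p) : IsUnit (Sᵀ * S) := by
  rw [← mulVec_surjective_iff_isUnit]
  change Function.Surjective (Sᵀ * S).mulVecLin
  rw [← LinearMap.range_eq_top]
  apply Submodule.eq_top_of_finrank_eq
  rw [Module.finrank_fin_fun, ← rank, rank_transpose_mul_self, hrank]

theorem projection_transpose_mul_self (hrank : S.rank = p) :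
    (S * (Sᵀ * S)⁻¹ * Sᵀ)ᵀ * (S * (Sᵀ * S)⁻¹ * Sᵀ) = S * (Sᵀ * S)⁻¹ * Sᵀ := by
  have hinv : (Sᵀ * S)⁻¹ * (Sᵀ * S) = 1 :=
    nonsing_inv_mul _ ((isUnit_iff_isUnit_det _).mp (isUnit_transpose_mul_self_of_rank_eq S hrank))
  rw [transpose_mul, transpose_mul, transpose_transpose, transpose_nonsing_inv, transpose_mul,
    transpose_transpose]
  calc S * ((Sᵀ * S)⁻¹ * Sᵀ) * (S * (Sᵀ * S)⁻¹ * Sᵀ)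
      = S * ((Sᵀ * S)⁻¹ * (Sᵀ * S)) * ((Sᵀ * S)⁻¹ * Sᵀ) := by simp only [Matrix.mul_assoc]
    _ = S * (Sᵀ * S)⁻¹ * Sᵀ := by rw [hinv, Matrix.mul_one, Matrix.mul_assoc]

theorem transpose_mul_self_sqrt_inv_mul_transpose (hPSD : (Sᵀ * S).PosSemidef) :
    (hPSD.sqrt⁻¹ * Sᵀ)ᵀ * (hPSD.sqrt⁻¹ * Sᵀ) = S * (Sᵀ * S)⁻¹ * Sᵀ := by
  have hsymm : hPSD.sqrtᵀ = hPSD.sqrt := by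
    rw [← conjTranspose_eq_transpose_of_trivial, hPSD.conjTranspose_sqrt]
  rw [transpose_mul, transpose_transpose, transpose_nonsing_inv, hsymm]
  calc S * hPSD.sqrt⁻¹ * (hPSD.sqrt⁻¹ * Sᵀ) = S * (hPSD.sqrt⁻¹ * hPSD.sqrt⁻¹) * Sᵀ := by
        simp only [Matrix.mul_assoc]
    _ = S * (Sᵀ * S)⁻¹ * Sᵀ := by rw [← Matrix.mul_inv_rev, hPSD.sqrt_mul_self]

end projection

theorem sufficient_decrease {L β α c Δ : ℝ} (hL : 0 < L) (hβ : 1 / 2 < β ∧ β < 1)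
    (hα : β / L < α) (hc : 0 ≤ c) (hdesc : α * c - L / 2 * (α ^ 2 * c) ≤ Δ)
    (hcase : α ≤ 1 / L ∨ α * c ≤ Δ) : (2 * β - 1) / (2 * L) * c ≤ Δ := by
  have hβα : β < α * L := by rwa [div_lt_iff₀ hL] at hα
  rw [div_mul_eq_mul_div, div_le_iff₀ (by positivity)]
  rcases hcase with hshort | haccept
  · have hαL : α * L ≤ 1 := by rwa [le_div_iff₀ hL] at hshort
    nlinarith [mul_le_mul_of_nonneg_right hαL hc, mul_le_mul_of_nonneg_right hβα.le hc,
      mul_nonneg (mul_nonneg (by linarith : 0 ≤ α * L) hc) (by linarith : 0 ≤ 1 - α * L)]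
  · nlinarith [mul_le_mul_of_nonneg_right hβα.le hc]

/-- Per-iteration decrease of subspace gradient descent with backtracking line search
(Lemma 2.1). -/
theorem stmt_3 (d p : ℕ) (L β α : ℝ) (hL : 0 < L) (hβ : 1 / 2 < β ∧ β < 1)
    (f : (Fin d → ℝ) → ℝ) (gradf : (Fin d → ℝ) → Fin d → ℝ)
    (hdiff : Differentiable ℝ f)
    (hgrad : ∀ x v, fderiv ℝ f x v = gradf x ⬝ᵥ v)
    (hlip : ∀ x y, euclNorm (gradf x - gradf y) ≤ L * euclNorm (x - y))
    (S : Matrix (Fin d) (Fin p) ℝ) (hrank : S.rank = p) (hPSD : (Sᵀ * S).PosSemidef)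
    (x xp : Fin d → ℝ) (hα : β / L < α)
    (hxp : xp = x - α • ((S * (Sᵀ * S)⁻¹ * Sᵀ) *ᵥ gradf x))
    (hcase : α ≤ 1 / L ∨
      f xp ≤ f x - α * euclNorm ((S * (Sᵀ * S)⁻¹ * Sᵀ) *ᵥ gradf x) ^ 2) :
    f x - f xp ≥ (2 * β - 1) / (2 * L) * euclNorm ((hPSD.sqrt⁻¹ * Sᵀ) *ᵥ gradf x) ^ 2 ∧
    euclNorm ((hPSD.sqrt⁻¹ * Sᵀ) *ᵥ gradf x) ^ 2 =
      euclNorm ((S * (Sᵀ * S)⁻¹ * Sᵀ) *ᵥ gradf x) ^ 2 := by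
  set g := gradf x
  set P := S * (Sᵀ * S)⁻¹ * Sᵀ
  have hPg : euclNorm (P *ᵥ g) ^ 2 = g ⬝ᵥ (P *ᵥ g) := by
    rw [euclNorm_mulVec_sq, projection_transpose_mul_self S hrank]
  have hsqrt : euclNorm ((hPSD.sqrt⁻¹ * Sᵀ) *ᵥ g) ^ 2 = g ⬝ᵥ (P *ᵥ g) := by
    rw [euclNorm_mulVec_sq, transpose_mul_self_sqrt_inv_mul_transpose S hPSD]
  have hdesc := descent_lemma hdiff hgrad hlip x (-α • (P *ᵥ g))
  have hstep : x + -α • (P *ᵥ g) = xp := by rw [hxp, neg_smul, sub_eq_add_neg]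
  rw [hstep, euclNorm_smul, mul_pow, sq_abs, hPg, dotProduct_smul, smul_eq_mul] at hdesc
  rw [hPg] at hcase
  refine ⟨?_, by rw [hsqrt, hPg]⟩
  rw [hsqrt, ge_iff_le]
  exact sufficient_decrease hL hβ hα (hPg ▸ sq_nonneg _) (by linarith)
    (hcase.imp_right fun h ↦ by linarith)
end

section
/- Fix d ≥ 1, λ > 0 and integers ℓ ≤ k − 1. Let s_ℓ, …, s_{k−1} ∈ ℝ^d be unit vectors and set C := λ I_d + Σ_{j=ℓ}^{k−1} s_j s_jᵀ. Then for every i with ℓ ≤ i ≤ k − 1, Σ_{j=ℓ}^{i} s_jᵀ C⁻¹ s_j ≤ d. -/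
open Matrix Finset

/-! With `S = ∑ s_j s_jᵀ`, the sum of the squared `C⁻¹`-norms of all the `s_j` is
`tr (C⁻¹ S) = tr (C⁻¹ (C - λ I)) = d - λ tr C⁻¹ ≤ d`, since `C⁻¹` is positive definite.
Each term being nonnegative, a partial sum is bounded by the full one. -/

namespace Matrix

variable {n : Type*}

lemma PosSemidef.posDef_smul_one_add [DecidableEq n] {lam : ℝ} (hlam : 0 < lam)
    {S : Matrix n n ℝ} (hS : S.PosSemidef) : (lam • 1 + S).PosDef :=
  (PosDef.one.smul hlam).add_posSemidef hS

variable [Fintype n]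

lemma dotProduct_mulVec_self_eq_trace_mul_vecMulVec {R : Type*} [CommSemiring R]
    (M : Matrix n n R) (v : n → R) : v ⬝ᵥ (M *ᵥ v) = trace (M * vecMulVec v v) := by
  rw [mul_vecMulVec, trace_vecMulVec, dotProduct_comm]

lemma posSemidef_sum_vecMulVec_self {ι : Type*} (u : Finset ι) (s : ι → n → ℝ) :
    (∑ j ∈ u, vecMulVec (s j) (s j)).PosSemidef :=
  posSemidef_sum u fun j _ => posSemidef_vecMulVec_self_star (s j)

variable [DecidableEq n]

lemma PosSemidef.trace_inv_smul_one_add_mul_le_card {lam : ℝ} (hlam : 0 < lam)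
    {S : Matrix n n ℝ} (hS : S.PosSemidef) :
    trace ((lam • 1 + S)⁻¹ * S) ≤ Fintype.card n := by
  have hC := hS.posDef_smul_one_add hlam
  have hdet : IsUnit (lam • 1 + S).det := (isUnit_iff_isUnit_det _).mp hC.isUnit
  have hCS : (lam • 1 + S)⁻¹ * S = 1 - lam • (lam • 1 + S)⁻¹ := by
    have h := nonsing_inv_mul _ hdet
    rw [Matrix.mul_add, Matrix.mul_smul, Matrix.mul_one] at h
    exact eq_sub_of_add_eq' h
  have htrace : 0 ≤ trace (lam • 1 + S)⁻¹ := hC.inv.posSemidef.trace_nonneg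
  rw [hCS, trace_sub, trace_smul, trace_one, smul_eq_mul]
  linarith [mul_nonneg hlam.le htrace]

lemma sum_dotProduct_inv_mulVec_le_card {ι : Type*} {t u : Finset ι} (htu : t ⊆ u)
    {lam : ℝ} (hlam : 0 < lam) (s : ι → n → ℝ) :
    ∑ j ∈ t, s j ⬝ᵥ ((lam • 1 + ∑ j' ∈ u, vecMulVec (s j') (s j'))⁻¹ *ᵥ s j)
      ≤ Fintype.card n := by
  set S := ∑ j' ∈ u, vecMulVec (s j') (s j')
  have hS : S.PosSemidef := posSemidef_sum_vecMulVec_self u s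
  have hCinv : (lam • 1 + S)⁻¹.PosSemidef := (hS.posDef_smul_one_add hlam).inv.posSemidef
  calc ∑ j ∈ t, s j ⬝ᵥ ((lam • 1 + S)⁻¹ *ᵥ s j)
      ≤ ∑ j ∈ u, s j ⬝ᵥ ((lam • 1 + S)⁻¹ *ᵥ s j) :=
        sum_le_sum_of_subset_of_nonneg htu fun j _ _ => hCinv.dotProduct_mulVec_nonneg (s j)
    _ = trace ((lam • 1 + S)⁻¹ * S) := by
        simp only [S, Matrix.mul_sum, trace_sum, dotProduct_mulVec_self_eq_trace_mul_vecMulVec]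
    _ ≤ Fintype.card n := hS.trace_inv_smul_one_add_mul_le_card hlam

end Matrix

theorem stmt_7_general (d : ℕ) (lam : ℝ) (hlam : 0 < lam)
    (ℓ k : ℕ)
    (s : ℕ → Fin d → ℝ) :
    ∀ i, ℓ ≤ i → i ≤ k - 1 →
      ∑ j ∈ Finset.Icc ℓ i,
        s j ⬝ᵥ ((lam • (1 : Matrix (Fin d) (Fin d) ℝ) +
          ∑ j' ∈ Finset.Icc ℓ (k - 1), vecMulVec (s j') (s j'))⁻¹ *ᵥ s j) ≤ (d : ℝ) := by
  intro i _ hik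
  simpa using sum_dotProduct_inv_mulVec_le_card (Icc_subset_Icc_right (a := ℓ) hik) hlam s

/-- Trace bound: partial sums of squared Mahalanobis norms of the measurement
directions with respect to the inverse covariance are at most `d`. -/
theorem stmt_7 (d : ℕ) (hd : 1 ≤ d) (lam : ℝ) (hlam : 0 < lam)
    (ℓ k : ℕ) (hk : 1 ≤ k) (hℓ : ℓ ≤ k - 1)
    (s : ℕ → Fin d → ℝ)
    (hs : ∀ j ∈ Finset.Icc ℓ (k - 1), euclNorm (s j) = 1) :
    ∀ i, ℓ ≤ i → i ≤ k - 1 →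
      ∑ j ∈ Finset.Icc ℓ i,
        s j ⬝ᵥ ((lam • (1 : Matrix (Fin d) (Fin d) ℝ) +
          ∑ j' ∈ Finset.Icc ℓ (k - 1), vecMulVec (s j') (s j'))⁻¹ *ᵥ s j) ≤ (d : ℝ) :=
  stmt_7_general d lam hlam ℓ k s
end

section
/- Fix d ≥ 1, λ > 0 and integers ℓ ≤ k − 1. Let s_ℓ, …, s_{k−1} ∈ ℝ^d be unit vectors and set C := λ I_d + Σ_{j=ℓ}^{k−1} s_j s_jᵀ. Then for every i with ℓ ≤ i ≤ k − 1, the spectral norm of C⁻¹ A_i, where A_i := Σ_{j=ℓ}^{i} s_j s_jᵀ, satisfies ‖C⁻¹ A_i‖ ≤ √(d (i − ℓ + 1)/λ). -/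
/-!
Write `y = C⁻¹ Aᵢ x`, so that `C y = Aᵢ x`, and note `0 ≤ Aᵢ ≤ C - λ I`. Then
`yᵀ Aᵢ x = yᵀ C y ≥ λ ‖y‖² + yᵀ Aᵢ y`, and Cauchy–Schwarz for the positive semidefinite form `Aᵢ`
bounds the left side by `√(yᵀ Aᵢ y · xᵀ Aᵢ x)`; together these force `λ ‖y‖² ≤ xᵀ Aᵢ x`.
Since `Aᵢ` is a sum of `i - ℓ + 1` rank-one projections, `xᵀ Aᵢ x ≤ (i - ℓ + 1) ‖x‖²`,
which gives `‖C⁻¹ Aᵢ‖ ≤ √((i - ℓ + 1)/λ)`, a fortiori the bound with the factor `d ≥ 1`.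
-/

open Matrix Finset

namespace Matrix

variable {n : Type*} [Fintype n]

theorem PosSemidef.dotProduct_mulVec_sq_le {A : Matrix n n ℝ} (hA : A.PosSemidef) (x y : n → ℝ) :
    (x ⬝ᵥ A *ᵥ y) ^ 2 ≤ (x ⬝ᵥ A *ᵥ x) * (y ⬝ᵥ A *ᵥ y) := by
  have hsymm : y ⬝ᵥ A *ᵥ x = x ⬝ᵥ A *ᵥ y := by
    rw [dotProduct_mulVec, ← mulVec_transpose, dotProduct_comm,
      ← conjTranspose_eq_transpose_of_trivial, hA.isHermitian.eq]
  have hquad : ∀ t : ℝ,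
      0 ≤ (y ⬝ᵥ A *ᵥ y) * (t * t) + 2 * (x ⬝ᵥ A *ᵥ y) * t + x ⬝ᵥ A *ᵥ x := by
    intro t
    have := hA.dotProduct_mulVec_nonneg (x + t • y)
    simp only [star_trivial, mulVec_add, mulVec_smul, add_dotProduct, dotProduct_add,
      smul_dotProduct, dotProduct_smul, smul_eq_mul, hsymm] at this
    linarith
  have := discrim_le_zero hquad
  rw [discrim] at this
  linarith

theorem posSemidef_vecMulVec_self (v : n → ℝ) : (vecMulVec v v).PosSemidef := by
  simpa using posSemidef_vecMulVec_self_star v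

theorem dotProduct_vecMulVec_self_mulVec (v x : n → ℝ) :
    x ⬝ᵥ vecMulVec v v *ᵥ x = (v ⬝ᵥ x) ^ 2 := by
  rw [vecMulVec_mulVec, op_smul_eq_smul, dotProduct_smul, smul_eq_mul, dotProduct_comm, sq]

theorem dotProduct_sum_vecMulVec_self_mulVec_le {ι : Type*} (u : Finset ι) (s : ι → n → ℝ)
    (x : n → ℝ) :
    x ⬝ᵥ (∑ j ∈ u, vecMulVec (s j) (s j)) *ᵥ x ≤ (∑ j ∈ u, s j ⬝ᵥ s j) * (x ⬝ᵥ x) := by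
  rw [sum_mulVec, dotProduct_sum, Finset.sum_mul]
  classical
  refine Finset.sum_le_sum fun j _ => ?_
  simpa [dotProduct_vecMulVec_self_mulVec] using
    PosSemidef.one.dotProduct_mulVec_sq_le (s j) x

theorem PosSemidef.mul_dotProduct_self_le_of_mulVec_eq [DecidableEq n] {A B : Matrix n n ℝ}
    (hA : A.PosSemidef) (hBA : (B - A).PosSemidef) {lam : ℝ} {x y : n → ℝ}
    (hxy : (lam • (1 : Matrix n n ℝ) + B) *ᵥ y = A *ᵥ x) :
    lam * (y ⬝ᵥ y) ≤ x ⬝ᵥ A *ᵥ x := by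
  set q := y ⬝ᵥ A *ᵥ x
  have hq : lam * (y ⬝ᵥ y) + y ⬝ᵥ A *ᵥ y ≤ q := by
    have hgap := hBA.dotProduct_mulVec_nonneg y
    have hCy := congrArg (y ⬝ᵥ ·) hxy
    simp only [star_trivial, sub_mulVec, dotProduct_sub, add_mulVec, smul_mulVec, one_mulVec,
      dotProduct_add, dotProduct_smul, smul_eq_mul] at hgap hCy
    linarith
  have hcs := hA.dotProduct_mulVec_sq_le y x
  have hyy := dotProduct_self_star_nonneg y
  have hAy := hA.dotProduct_mulVec_nonneg y
  have hAx := hA.dotProduct_mulVec_nonneg x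
  simp only [star_trivial] at hyy hAy hAx
  nlinarith

theorem norm_toEuclideanCLM_le_sqrt [DecidableEq n] (M : Matrix n n ℝ) {c : ℝ}
    (h : ∀ x, (M *ᵥ x) ⬝ᵥ (M *ᵥ x) ≤ c * (x ⬝ᵥ x)) :
    ‖toEuclideanCLM (𝕜 := ℝ) M‖ ≤ √c := by
  refine ContinuousLinearMap.opNorm_le_bound _ (Real.sqrt_nonneg _) fun x => ?_
  rw [← Real.sqrt_sq (norm_nonneg x), ← Real.sqrt_mul' _ (sq_nonneg _),
    ← Real.sqrt_sq (norm_nonneg _)]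
  have hnorm (v : EuclideanSpace ℝ n) : ‖v‖ ^ 2 = v.ofLp ⬝ᵥ v.ofLp := by
    rw [← real_inner_self_eq_norm_sq, EuclideanSpace.inner_eq_star_dotProduct, star_trivial]
  refine Real.sqrt_le_sqrt ?_
  rw [hnorm, hnorm, ofLp_toEuclideanCLM]
  exact h x

end Matrix

theorem euclNorm_eq_sqrt_dotProduct {n : ℕ} (v : Fin n → ℝ) : euclNorm v = √(v ⬝ᵥ v) := by
  simp only [euclNorm, dotProduct, sq]

theorem stmt_8_general (d : ℕ) (hd : 1 ≤ d) (lam : ℝ) (hlam : 0 < lam)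
    (ℓ k : ℕ)
    (s : ℕ → Fin d → ℝ)
    (hs : ∀ j ∈ Finset.Icc ℓ (k - 1), euclNorm (s j) = 1) :
    ∀ i, ℓ ≤ i → i ≤ k - 1 →
      ‖Matrix.toEuclideanCLM (𝕜 := ℝ)
        ((lam • (1 : Matrix (Fin d) (Fin d) ℝ) +
            ∑ j' ∈ Finset.Icc ℓ (k - 1), vecMulVec (s j') (s j'))⁻¹ *
          (∑ j ∈ Finset.Icc ℓ i, vecMulVec (s j) (s j)))‖ ≤
      Real.sqrt ((d : ℝ) * ((i : ℝ) - (ℓ : ℝ) + 1) / lam) := by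
  intro i hℓi hik
  set A := ∑ j ∈ Icc ℓ i, vecMulVec (s j) (s j)
  set B := ∑ j ∈ Icc ℓ (k - 1), vecMulVec (s j) (s j)
  have hsub : Icc ℓ i ⊆ Icc ℓ (k - 1) := Icc_subset_Icc le_rfl hik
  have hA : A.PosSemidef := posSemidef_sum _ fun j _ => posSemidef_vecMulVec_self (s j)
  have hBA : (B - A).PosSemidef := by
    rw [show B = _ from (sum_sdiff hsub).symm, add_sub_cancel_right]
    exact posSemidef_sum _ fun j _ => posSemidef_vecMulVec_self (s j)
  have hC : (lam • 1 + B).PosDef :=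
    (PosDef.one.smul hlam).add_posSemidef (by simpa using hBA.add hA)
  have hgram (x : Fin d → ℝ) : x ⬝ᵥ A *ᵥ x ≤ (i - ℓ + 1) * (x ⬝ᵥ x) := by
    have hunit : ∑ j ∈ Icc ℓ i, s j ⬝ᵥ s j = i - ℓ + 1 := by
      rw [sum_congr rfl fun j hj => by
        rw [← Real.sqrt_eq_one, ← euclNorm_eq_sqrt_dotProduct, hs j (hsub hj)], sum_const,
        Nat.card_Icc, nsmul_one, Nat.cast_sub (by omega)]
      push_cast
      ring
    simpa [hunit] using dotProduct_sum_vecMulVec_self_mulVec_le (Icc ℓ i) s x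
  refine norm_toEuclideanCLM_le_sqrt _ fun x => ?_
  have hy : (lam • 1 + B) *ᵥ (((lam • 1 + B)⁻¹ * A) *ᵥ x) = A *ᵥ x := by
    rw [mulVec_mulVec, ← Matrix.mul_assoc,
      mul_nonsing_inv _ ((isUnit_iff_isUnit_det _).mp hC.isUnit), Matrix.one_mul]
  have hx : 0 ≤ x ⬝ᵥ x := by simpa using dotProduct_self_star_nonneg x
  have hi : (0 : ℝ) ≤ i - ℓ + 1 := by linarith [(Nat.cast_le (α := ℝ)).mpr hℓi]
  rw [div_mul_eq_mul_div, le_div_iff₀ hlam]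
  calc _ = lam * ((((lam • 1 + B)⁻¹ * A) *ᵥ x) ⬝ᵥ (((lam • 1 + B)⁻¹ * A) *ᵥ x)) := mul_comm _ _
    _ ≤ x ⬝ᵥ A *ᵥ x := hA.mul_dotProduct_self_le_of_mulVec_eq hBA hy
    _ ≤ (i - ℓ + 1) * (x ⬝ᵥ x) := hgram x
    _ ≤ d * (i - ℓ + 1) * (x ⬝ᵥ x) :=
      mul_le_mul_of_nonneg_right (le_mul_of_one_le_left hi (by exact_mod_cast hd)) hx

/-- Spectral norm bound `‖C⁻¹ Aᵢ‖ ≤ √(d(i − ℓ + 1)/λ)` from the proof of Lemma 3.1. -/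
theorem stmt_8 (d : ℕ) (hd : 1 ≤ d) (lam : ℝ) (hlam : 0 < lam)
    (ℓ k : ℕ) (hk : 1 ≤ k) (hℓ : ℓ ≤ k - 1)
    (s : ℕ → Fin d → ℝ)
    (hs : ∀ j ∈ Finset.Icc ℓ (k - 1), euclNorm (s j) = 1) :
    ∀ i, ℓ ≤ i → i ≤ k - 1 →
      ‖Matrix.toEuclideanCLM (𝕜 := ℝ)
        ((lam • (1 : Matrix (Fin d) (Fin d) ℝ) +
            ∑ j' ∈ Finset.Icc ℓ (k - 1), vecMulVec (s j') (s j'))⁻¹ *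
          (∑ j ∈ Finset.Icc ℓ i, vecMulVec (s j) (s j)))‖ ≤
      Real.sqrt ((d : ℝ) * ((i : ℝ) - (ℓ : ℝ) + 1) / lam) :=
  stmt_8_general d hd lam hlam ℓ k s hs
end

section
/- Let A ∈ ℝ^{d×d} be symmetric positive definite, and let s ∈ ℝ^d satisfy sᵀ A⁻¹ s ≤ 1. Then sᵀ A⁻¹ s ≤ 2 log( det(A + s sᵀ) / det(A) ). -/
open Matrix Finset

theorem Matrix.det_add_vecMulVec {m α : Type*} [Fintype m] [DecidableEq m] [CommRing α]
    {A : Matrix m m α} (hA : IsUnit A.det) (u v : m → α) :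
    (A + vecMulVec u v).det = A.det * (1 + v ⬝ᵥ (A⁻¹ *ᵥ u)) := by
  have hfactor : A + vecMulVec u v = A * (1 + vecMulVec (A⁻¹ *ᵥ u) v) := by
    rw [Matrix.mul_add, Matrix.mul_one, mul_vecMulVec, mulVec_mulVec, mul_nonsing_inv A hA,
      one_mulVec]
  rw [hfactor, det_mul, vecMulVec_eq Unit, det_one_add_replicateCol_mul_replicateRow]

theorem Matrix.PosDef.det_add_vecMulVec_div_det {m : Type*} [Fintype m] [DecidableEq m]
    {A : Matrix m m ℝ} (hA : A.PosDef) (u v : m → ℝ) :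
    (A + vecMulVec u v).det / A.det = 1 + v ⬝ᵥ (A⁻¹ *ᵥ u) := by
  rw [det_add_vecMulVec (isUnit_iff_ne_zero.mpr hA.det_pos.ne'),
    mul_div_cancel_left₀ _ hA.det_pos.ne']

theorem Matrix.PosDef.dotProduct_inv_mulVec_nonneg {m : Type*} [Fintype m] [DecidableEq m]
    {A : Matrix m m ℝ} (hA : A.PosDef) (s : m → ℝ) : 0 ≤ s ⬝ᵥ (A⁻¹ *ᵥ s) := by
  simpa using hA.inv.posSemidef.dotProduct_mulVec_nonneg s

theorem Real.half_le_log_one_add {y : ℝ} (hy₀ : 0 ≤ y) (hy₁ : y ≤ 1) :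
    y / 2 ≤ Real.log (1 + y) :=
  calc y / 2 ≤ y / (1 + y) := div_le_div_of_nonneg_left hy₀ (by positivity) (by linarith)
    _ = 1 - (1 + y)⁻¹ := by field_simp; ring
    _ ≤ Real.log (1 + y) := Real.one_sub_inv_le_log_of_pos (by positivity)

/-- Per-step potential inequality: for `A` positive definite and `sᵀA⁻¹s ≤ 1`,
`sᵀA⁻¹s ≤ 2 log(det(A + ssᵀ)/det A)`. -/
theorem stmt_9 (d : ℕ) (A : Matrix (Fin d) (Fin d) ℝ) (hA : A.PosDef)
    (s : Fin d → ℝ) (hs : s ⬝ᵥ (A⁻¹ *ᵥ s) ≤ 1) :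
    s ⬝ᵥ (A⁻¹ *ᵥ s) ≤ 2 * Real.log ((A + vecMulVec s s).det / A.det) := by
  rw [hA.det_add_vecMulVec_div_det]
  linarith [Real.half_le_log_one_add (hA.dotProduct_inv_mulVec_nonneg s) hs]
end
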